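/- For density operators ρ, σ with supp(ρ) ⊆ supp(σ), the max-relative entropy D_max(ρ‖σ) := inf{λ : ρ ≤ 2^λ σ} satisfies D_max(ρ‖σ) ≥ 0, with equality if and only if ρ = σ. -/

import Mathlib

open Classical

open Matrix
open scoped ComplexOrder

noncomputable def msqrt {n : Type*} [Fintype n] [DecidableEq n] (A : Matrix n n ℂ) :
    Matrix n n ℂ :=
  if h : A.PosSemidef then
    (h.1.eigenvectorUnitary : Matrix n n ℂ) * diagonal ((↑) ∘ Real.sqrt ∘ h.1.eigenvalues) *
      (star (h.1.eigenvectorUnitary : Matrix n n ℂ))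
  else 0

/-- Uhlmann fidelity F_U(ρ,σ) = (Tr √(√σ ρ √σ))². -/
noncomputable def uFid {n : Type*} [Fintype n] [DecidableEq n] (ρ σ : Matrix n n ℂ) : ℝ :=
  ((msqrt (msqrt σ * ρ * msqrt σ)).trace.re) ^ 2

/-- Purified distance. -/
noncomputable def pDist {n : Type*} [Fintype n] [DecidableEq n] (ρ σ : Matrix n n ℂ) : ℝ :=
  Real.sqrt (1 - uFid ρ σ)

def IsDensity {n : Type*} [Fintype n] [DecidableEq n] (ρ : Matrix n n ℂ) : Prop :=
  ρ.PosSemidef ∧ ρ.trace = 1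

noncomputable def Dmax {n : Type*} [Fintype n] [DecidableEq n] (ρ σ : Matrix n n ℂ) : ℝ :=
  sInf {l : ℝ | (((2 : ℝ) ^ l) • σ - ρ).PosSemidef}

/-!
Let `S = {l | ρ ≤ 2^l σ}`, so that `D_max(ρ‖σ) = inf S`. Taking traces in `ρ ≤ 2^l σ` gives
`1 ≤ 2^l`, so the set lies in `[0, ∞)`; it is closed because the Loewner order is closed, so
the infimum is attained. At `D_max = 0` this gives `ρ ≤ σ` with equal traces, hence `ρ = σ`.
The set is nonempty thanks to the support condition: `range √ρ = range ρ ⊆ range σ = range √σ`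
gives `√ρ = √σ C`, so `ρ = √σ (C C*) √σ ≤ ‖C C*‖ σ`.
-/

-- Under `MatrixOrder`, `A ≤ B` unfolds to `(B - A).PosSemidef`, so `Dmax ρ σ` is definitionally
-- `sInf {l | ρ ≤ 2 ^ l • σ}`; the L2 operator norm makes matrices a C⋆-algebra.
open scoped MatrixOrder Matrix.Norms.L2Operator

theorem LinearMap.exists_comp_eq_of_range_le {R M N P : Type*} [Ring R] [AddCommGroup M]
    [Module R M] [AddCommGroup N] [Module R N] [AddCommGroup P] [Module R P]
    [Module.Projective R P] {f : P →ₗ[R] N} {g : M →ₗ[R] N} (h : range f ≤ range g) :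
    ∃ k : P →ₗ[R] M, g ∘ₗ k = f := by
  obtain ⟨k, hk⟩ := Module.projective_lifting_property g.rangeRestrict
    (f.codRestrict _ fun x ↦ h ⟨x, rfl⟩) g.surjective_rangeRestrict
  exact ⟨k, ext fun x ↦ congr_arg Subtype.val (LinearMap.congr_fun hk x)⟩

namespace Matrix

theorem exists_mul_eq_of_range_toLin'_le {K l m n : Type*} [Field K] [Fintype l] [Fintype n]
    [DecidableEq l] [DecidableEq n] {A : Matrix m n K} {B : Matrix m l K}
    (h : LinearMap.range (toLin' A) ≤ LinearMap.range (toLin' B)) :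
    ∃ C : Matrix l n K, B * C = A := by
  obtain ⟨k, hk⟩ := LinearMap.exists_comp_eq_of_range_le h
  exact ⟨LinearMap.toMatrix' k, toLin'.injective <| by rw [toLin'_mul, toLin'_toMatrix', hk]⟩

section RCLike

variable {𝕜 n : Type*} [RCLike 𝕜] [Fintype n]

theorem trace_le_trace_of_le {A B : Matrix n n 𝕜} (h : A ≤ B) : A.trace ≤ B.trace := by
  simpa [trace_sub] using (le_iff.mp h).trace_nonneg

theorem eq_of_le_of_trace_eq {A B : Matrix n n 𝕜} (h : A ≤ B) (htr : A.trace = B.trace) :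
    A = B := by
  have hzero : B - A = 0 :=
    (le_iff.mp h).trace_eq_zero_iff.mp (by rw [trace_sub, htr, sub_self])
  exact (sub_eq_zero.mp hzero).symm

theorem range_toLin'_cfcSqrt [DecidableEq n] {A : Matrix n n 𝕜} (hA : 0 ≤ A) :
    LinearMap.range (toLin' (CFC.sqrt A)) = LinearMap.range (toLin' A) := by
  have hsq : CFC.sqrt A * CFC.sqrt A = A := CFC.sqrt_mul_sqrt_self A
  have hle : LinearMap.range (toLin' A) ≤ LinearMap.range (toLin' (CFC.sqrt A)) := by
    conv_lhs => rw [← hsq, toLin'_mul]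
    exact LinearMap.range_comp_le_range _ _
  refine (Submodule.eq_of_le_of_finrank_eq hle ?_).symm
  calc A.rank = (star (CFC.sqrt A) * CFC.sqrt A).rank := by
        rw [(CFC.sqrt_nonneg A).isSelfAdjoint.star_eq, hsq]
    _ = (CFC.sqrt A).rank := rank_conjTranspose_mul_self _

end RCLike

theorem exists_le_smul_of_range_toLin'_le {n : Type*} [Fintype n] [DecidableEq n]
    {A B : Matrix n n ℂ} (hA : 0 ≤ A) (hB : 0 ≤ B)
    (h : LinearMap.range (toLin' A) ≤ LinearMap.range (toLin' B)) :
    ∃ c : ℝ, A ≤ c • B := by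
  obtain ⟨C, hC⟩ := exists_mul_eq_of_range_toLin'_le (A := CFC.sqrt A) (B := CFC.sqrt B)
    (by rwa [range_toLin'_cfcSqrt hA, range_toLin'_cfcSqrt hB])
  have hsqrt (X : Matrix n n ℂ) (hX : 0 ≤ X) : CFC.sqrt X * star (CFC.sqrt X) = X := by
    rw [(CFC.sqrt_nonneg X).isSelfAdjoint.star_eq, CFC.sqrt_mul_sqrt_self X]
  refine ⟨‖C * star C‖, ?_⟩
  calc A = CFC.sqrt B * (C * star C) * star (CFC.sqrt B) := by
        rw [← hsqrt A hA, ← hC, star_mul, mul_assoc, mul_assoc, mul_assoc]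
    _ ≤ ‖C * star C‖ • (CFC.sqrt B * star (CFC.sqrt B)) :=
      CStarAlgebra.star_right_conjugate_le_norm_smul (.mul_star_self C)
    _ = ‖C * star C‖ • B := by rw [hsqrt B hB]

end Matrix

section Dmax

open Matrix

variable {n : Type*} [Fintype n] [DecidableEq n]

theorem isClosed_setOf_le_two_rpow_smul (ρ σ : Matrix n n ℂ) :
    IsClosed {l : ℝ | ρ ≤ (2 : ℝ) ^ l • σ} :=
  isClosed_le continuous_const (by fun_prop (disch := norm_num))

variable {ρ σ : Matrix n n ℂ}

theorem nonempty_setOf_le_two_rpow_smul (hρ : 0 ≤ ρ) (hσ : 0 ≤ σ)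
    (hsupp : LinearMap.range (toLin' ρ) ≤ LinearMap.range (toLin' σ)) :
    {l : ℝ | ρ ≤ (2 : ℝ) ^ l • σ}.Nonempty := by
  obtain ⟨c, hc⟩ := exists_le_smul_of_range_toLin'_le hρ hσ hsupp
  refine ⟨Real.logb 2 (max c 1), ?_⟩
  rw [Set.mem_ofPred_eq, Real.rpow_logb two_pos (by norm_num) (by positivity)]
  exact hc.trans (smul_le_smul_of_nonneg_right (le_max_left c 1) hσ)

theorem IsDensity.one_le_of_le_smul (hρ : IsDensity ρ) (hσ : IsDensity σ) {c : ℝ}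
    (h : ρ ≤ c • σ) : 1 ≤ c := by
  have htr := trace_le_trace_of_le h
  rw [trace_smul, hρ.2, hσ.2, Complex.real_smul, mul_one] at htr
  exact_mod_cast htr

theorem IsDensity.nonneg_of_le_two_rpow_smul (hρ : IsDensity ρ) (hσ : IsDensity σ) {l : ℝ}
    (h : ρ ≤ (2 : ℝ) ^ l • σ) : 0 ≤ l := by
  have hone := hρ.one_le_of_le_smul hσ h
  rwa [← Real.rpow_zero 2, Real.rpow_le_rpow_left_iff one_lt_two] at hone

end Dmax

theorem dmax_nonneg_eq_zero_iff {n : Type*} [Fintype n] [DecidableEq n]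
    (ρ σ : Matrix n n ℂ) (hρ : IsDensity ρ) (hσ : IsDensity σ)
    (hsupp : LinearMap.range (Matrix.toLin' ρ) ≤ LinearMap.range (Matrix.toLin' σ)) :
    0 ≤ Dmax ρ σ ∧ (Dmax ρ σ = 0 ↔ ρ = σ) := by
  set S := {l : ℝ | ρ ≤ (2 : ℝ) ^ l • σ}
  have hne : S.Nonempty := nonempty_setOf_le_two_rpow_smul hρ.1.nonneg hσ.1.nonneg hsupp
  have hlow : ∀ l ∈ S, 0 ≤ l := fun _ hl ↦ hρ.nonneg_of_le_two_rpow_smul hσ hl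
  have hmem : Dmax ρ σ ∈ S := (isClosed_setOf_le_two_rpow_smul ρ σ).csInf_mem hne ⟨0, hlow⟩
  have hnonneg : 0 ≤ Dmax ρ σ := le_csInf hne hlow
  refine ⟨hnonneg, fun h0 ↦ ?_, fun hρσ ↦ ?_⟩
  · rw [h0, Set.mem_ofPred_eq, Real.rpow_zero, one_smul] at hmem
    exact Matrix.eq_of_le_of_trace_eq hmem (hρ.2.trans hσ.2.symm)
  · subst hρσ
    exact le_antisymm (csInf_le ⟨0, hlow⟩ (show (0 : ℝ) ∈ S by simp [S])) hnonneg
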